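/- Let k be an algebraically closed field of characteristic not 2 and let f = aX² + 2bXY + cY² + 2dX + 2eY + g be a quadratic in k[X,Y]. Then f is a product of two linear polynomials over k if and only if the determinant of the symmetric matrix [[a, b, d], [b, c, e], [d, e, g]] is zero. -/

import Mathlib

/-!
If `f = l₁ l₂` with coefficient vectors `u, v` of `l₁, l₂`, then twice the symmetric matrix
of `f` is `u vᵀ + v uᵀ`, which has rank at most two, so its determinant vanishes.

Conversely, for `a ≠ 0` completing the square gives
`a f = (aX + bY + d)² - ((b² - ac)Y² + 2(bd - ae)Y + (d² - ag))`, and the discriminant of the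
subtracted binary quadric is `-a det`. When `det = 0` it is therefore the square of a linear form
over the algebraically closed field, and `a f` is a difference of two squares. The case `c ≠ 0`
follows by exchanging `X` and `Y`, and the case `a = c = 0` is factored by hand.
-/

open MvPolynomial Matrix

section

variable {k : Type*} [Field k]

noncomputable def conic (a b c d e g : k) : MvPolynomial (Fin 2) k :=
  C a * X 0 ^ 2 + C (2 * b) * (X 0 * X 1) + C c * X 1 ^ 2 + C (2 * d) * X 0 + C (2 * e) * X 1 + C g

noncomputable def linForm (p q r : k) : MvPolynomial (Fin 2) k :=
  C p * X 0 + C q * X 1 + C r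

def IsConicProduct (a b c d e g p q r p' q' r' : k) : Prop :=
  a = p * p' ∧ 2 * b = p * q' + q * p' ∧ c = q * q' ∧
    2 * d = p * r' + r * p' ∧ 2 * e = q * r' + r * q' ∧ g = r * r'

theorem totalDegree_linForm_le (p q r : k) : (linForm p q r).totalDegree ≤ 1 := by
  refine (totalDegree_add _ _).trans (max_le ((totalDegree_add _ _).trans (max_le ?_ ?_)) ?_) <;>
    simp [totalDegree_C, (totalDegree_mul _ _).trans, totalDegree_X]

theorem eq_single_or_eq_zero_of_add_le_one {m : Fin 2 →₀ ℕ} (h : m 0 + m 1 ≤ 1) :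
    m = Finsupp.single 0 1 ∨ m = Finsupp.single 1 1 ∨ m = 0 := by
  have : (m 0 = 1 ∧ m 1 = 0) ∨ (m 0 = 0 ∧ m 1 = 1) ∨ (m 0 = 0 ∧ m 1 = 0) := by omega
  rcases this with ⟨h0, h1⟩ | ⟨h0, h1⟩ | ⟨h0, h1⟩ <;>
    [left; (right; left); (right; right)] <;> ext i <;> fin_cases i <;> simp [h0, h1]

theorem exists_eq_linForm_of_totalDegree_le_one {l : MvPolynomial (Fin 2) k}
    (h : l.totalDegree ≤ 1) : ∃ p q r, l = linForm p q r := by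
  have hsupp : l.support ⊆ {Finsupp.single 0 1, Finsupp.single 1 1, 0} := fun m hm => by
    have := (le_totalDegree hm).trans h
    rw [Finsupp.sum_fintype _ _ (by simp), Fin.sum_univ_two] at this
    simpa using eq_single_or_eq_zero_of_add_le_one this
  refine ⟨l.coeff (Finsupp.single 0 1), l.coeff (Finsupp.single 1 1), l.coeff 0, ?_⟩
  rw [l.as_sum,
    Finset.sum_subset hsupp fun m _ hm => by rw [notMem_support_iff.1 hm, monomial_zero]]
  simp [linForm, Finset.sum_insert, Finsupp.single_eq_single_iff, monomial_eq, add_assoc,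
    @eq_comm _ (0 : Fin 2 →₀ ℕ)]

theorem conic_eq_linForm_mul_iff (hch : (2 : k) ≠ 0) {a b c d e g p q r p' q' r' : k} :
    conic a b c d e g = linForm p q r * linForm p' q' r' ↔
      IsConicProduct a b c d e g p q r p' q' r' := by
  constructor
  · intro h
    have E : ∀ x y : k, a * x ^ 2 + 2 * b * (x * y) + c * y ^ 2 + 2 * d * x + 2 * e * y + g
        = (p * x + q * y + r) * (p' * x + q' * y + r') := fun x y => by
      simpa [conic, linForm] using congrArg (eval ![x, y]) h
    have cancel {u v : k} (h : 2 * u = 2 * v) : u = v := mul_left_cancel₀ hch h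
    -- second differences at the points `0, ±1` of both axes isolate the coefficients
    exact ⟨cancel (by linear_combination E 1 0 + E (-1) 0 - 2 * E 0 0),
      cancel (cancel (by linear_combination E 1 1 + E (-1) (-1) - E 1 (-1) - E (-1) 1)),
      cancel (by linear_combination E 0 1 + E 0 (-1) - 2 * E 0 0),
      cancel (by linear_combination E 1 0 - E (-1) 0),
      cancel (by linear_combination E 0 1 - E 0 (-1)),
      by linear_combination E 0 0⟩
  · rintro ⟨rfl, hb, rfl, hd, he, rfl⟩
    simp only [conic, linForm, hb, hd, he, map_mul, map_add]
    ring

theorem det_symm_fin_three (a b c d e g : k) :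
    det !![a, b, d; b, c, e; d, e, g] =
      a * c * g + 2 * b * d * e - a * e ^ 2 - c * d ^ 2 - b ^ 2 * g := by
  simp [det_fin_three]
  ring

theorem det_vecMulVec_add_vecMulVec_fin_three (u v : Fin 3 → k) :
    det (vecMulVec u v + vecMulVec v u) = 0 := by
  simp [det_fin_three, vecMulVec]
  ring

theorem det_eq_zero_of_isConicProduct (hch : (2 : k) ≠ 0) {a b c d e g p q r p' q' r' : k}
    (h : IsConicProduct a b c d e g p q r p' q' r') : det !![a, b, d; b, c, e; d, e, g] = 0 := by
  obtain ⟨rfl, hb, rfl, hd, he, rfl⟩ := h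
  have hsymm : (2 : k) • !![p * p', b, d; b, q * q', e; d, e, r * r'] =
      vecMulVec ![p, q, r] ![p', q', r'] + vecMulVec ![p', q', r'] ![p, q, r] := by
    ext i j
    fin_cases i <;> fin_cases j <;> simp [vecMulVec, hb, hd, he] <;> ring
  have h8 := congrArg det hsymm
  rw [det_smul, det_vecMulVec_add_vecMulVec_fin_three] at h8
  simpa [hch] using h8

theorem exists_sq_eq_of_sq_eq_mul [IsAlgClosed k] {A B G : k} (h : B ^ 2 = A * G) :
    ∃ α β : k, α ^ 2 = A ∧ α * β = B ∧ β ^ 2 = G := by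
  obtain ⟨α, hα⟩ := IsAlgClosed.exists_pow_nat_eq A two_pos
  rcases eq_or_ne α 0 with rfl | hα0
  · obtain ⟨β, hβ⟩ := IsAlgClosed.exists_pow_nat_eq G two_pos
    have hB : B = 0 := pow_eq_zero_iff two_ne_zero |>.1 (by rw [h, ← hα]; ring)
    exact ⟨0, β, hα, by rw [hB, zero_mul], hβ⟩
  · refine ⟨α, B / α, hα, by field_simp, ?_⟩
    have hA : A ≠ 0 := hα ▸ pow_ne_zero 2 hα0
    rw [div_pow, hα, h]
    field_simp

theorem exists_isConicProduct_of_ne_zero [IsAlgClosed k] {a b c d e g : k} (ha : a ≠ 0)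
    (hdet : det !![a, b, d; b, c, e; d, e, g] = 0) :
    ∃ p q r p' q' r', IsConicProduct a b c d e g p q r p' q' r' := by
  rw [det_symm_fin_three] at hdet
  obtain ⟨α, β, hα, hαβ, hβ⟩ := exists_sq_eq_of_sq_eq_mul (A := b ^ 2 - a * c)
    (B := b * d - a * e) (G := d ^ 2 - a * g) (by linear_combination (-a) * hdet)
  refine ⟨1, (b + α) / a, (d + β) / a, a, b - α, d - β, by ring, ?_, ?_, ?_, ?_, ?_⟩ <;>
    field_simp
  · ring
  · linear_combination hα
  · ring
  · linear_combination 2 * hαβ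
  · linear_combination hβ

theorem exists_isConicProduct_of_det_eq_zero [IsAlgClosed k] {a b c d e g : k}
    (hdet : det !![a, b, d; b, c, e; d, e, g] = 0) :
    ∃ p q r p' q' r', IsConicProduct a b c d e g p q r p' q' r' := by
  rcases ne_or_eq a 0 with ha | rfl
  · exact exists_isConicProduct_of_ne_zero ha hdet
  rcases ne_or_eq c 0 with hc | rfl
  · have hdet' : det !![c, b, e; b, 0, d; e, d, g] = 0 := by
      rw [det_symm_fin_three] at hdet ⊢
      linear_combination hdet
    obtain ⟨p, q, r, p', q', r', h₁, h₂, h₃, h₄, h₅, h₆⟩ :=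
      exists_isConicProduct_of_ne_zero hc hdet'
    exact ⟨q, p, r, q', p', r', h₃, by rw [h₂]; ring, h₁, h₅, h₄, h₆⟩
  rcases ne_or_eq b 0 with hb | rfl
  · -- `f = 2bXY + 2dX + 2eY + g = (2bX + 2e)(Y + d/b)`, as `det = b(2de - bg)`
    rw [det_symm_fin_three] at hdet
    have hg : b * g = 2 * d * e := mul_left_cancel₀ hb (by linear_combination -hdet)
    refine ⟨2 * b, 0, 2 * e, 0, 1, d / b, by ring, by ring, by ring, by field_simp; ring, by ring,
      ?_⟩
    field_simp
    linear_combination hg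
  · exact ⟨2 * d, 2 * e, g, 0, 0, 1, by ring, by ring, by ring, by ring, by ring, by ring⟩

end

theorem stmt12_general {k : Type*} [Field k] [IsAlgClosed k] (hch : (2 : k) ≠ 0)
    (a b c d e g : k) :
    (∃ l₁ l₂ : MvPolynomial (Fin 2) k,
        l₁.totalDegree ≤ 1 ∧ l₂.totalDegree ≤ 1 ∧
        C a * X 0 ^ 2 + C (2 * b) * (X 0 * X 1) + C c * X 1 ^ 2 +
          C (2 * d) * X 0 + C (2 * e) * X 1 + C g = l₁ * l₂) ↔
      Matrix.det !![a, b, d; b, c, e; d, e, g] = 0 := by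
  change (∃ l₁ l₂, _ ∧ _ ∧ conic a b c d e g = l₁ * l₂) ↔ _
  constructor
  · rintro ⟨l₁, l₂, h₁, h₂, h⟩
    obtain ⟨p, q, r, rfl⟩ := exists_eq_linForm_of_totalDegree_le_one h₁
    obtain ⟨p', q', r', rfl⟩ := exists_eq_linForm_of_totalDegree_le_one h₂
    exact det_eq_zero_of_isConicProduct hch ((conic_eq_linForm_mul_iff hch).1 h)
  · intro hdet
    obtain ⟨p, q, r, p', q', r', h⟩ := exists_isConicProduct_of_det_eq_zero hdet
    exact ⟨_, _, totalDegree_linForm_le p q r, totalDegree_linForm_le p' q' r',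
      (conic_eq_linForm_mul_iff hch).2 h⟩

/-- Over an algebraically closed field of characteristic ≠ 2, the quadratic
`aX² + 2bXY + cY² + 2dX + 2eY + g` is a product of two linear polynomials iff
the determinant of the associated symmetric matrix vanishes. -/
theorem stmt12 {k : Type*} [Field k] [IsAlgClosed k] (hch : (2 : k) ≠ 0)
    (a b c d e g : k) (hq : ¬(a = 0 ∧ b = 0 ∧ c = 0)) :
    (∃ l₁ l₂ : MvPolynomial (Fin 2) k,
        l₁.totalDegree ≤ 1 ∧ l₂.totalDegree ≤ 1 ∧
        C a * X 0 ^ 2 + C (2 * b) * (X 0 * X 1) + C c * X 1 ^ 2 +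
          C (2 * d) * X 0 + C (2 * e) * X 1 + C g = l₁ * l₂) ↔
      Matrix.det !![a, b, d; b, c, e; d, e, g] = 0 :=
  stmt12_general hch a b c d e g
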